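/- arXiv:2301.06110 — 5 statements merged into one kernel-verified Lean document; each statement's English description precedes it below -/
import Mathlib

section
/- For all positive reals h, c, k and T, the frequency integral of the Planck function satisfies ∫₀^∞ B(ν,T) dν = a c T⁴ / (4π), where a = 8π⁵k⁴/(15h³c³); equivalently, integrating B over all frequencies and over the unit sphere of directions gives a c T⁴. -/
open Real MeasureTheory Metric
open Set

/-- The Planck function B(ν,T) = (2hν³/c²)·1/(exp(hν/(kT))−1). -/
noncomputable def planck (h c k ν T : ℝ) : ℝ :=
  (2 * h * ν ^ 3 / c ^ 2) * (1 / (Real.exp (h * ν / (k * T)) - 1))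

/-- The radiation constant a = 8π⁵k⁴/(15h³c³). -/
noncomputable def radConst (h c k : ℝ) : ℝ :=
  8 * Real.pi ^ 5 * k ^ 4 / (15 * h ^ 3 * c ^ 3)

lemma geom_aux {t : ℝ} (ht : 0 < t) :
    HasSum (fun n : ℕ => Real.exp (-((n : ℝ) + 1) * t)) (1 / (Real.exp t - 1)) := by
  have hr : |Real.exp (-t)| < 1 := by
    rw [abs_of_pos (Real.exp_pos _)]
    exact Real.exp_lt_one_iff.mpr (by linarith)
  have h := (hasSum_geometric_of_abs_lt_one hr).mul_left (Real.exp (-t))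
  have het : (1 : ℝ) < Real.exp t := by nlinarith [Real.add_one_le_exp t]
  have h2 := Real.exp_pos t
  have key : Real.exp (-t) * (1 - Real.exp (-t))⁻¹ = 1 / (Real.exp t - 1) := by
    have hinv : (Real.exp t)⁻¹ < 1 := inv_lt_one_of_one_lt₀ het
    have h3 : 1 - (Real.exp t)⁻¹ ≠ 0 := by linarith
    rw [Real.exp_neg, eq_div_iff (by linarith)]
    field_simp
    rw [div_self (by linarith : Real.exp t - 1 ≠ 0)]
  rw [key] at h
  convert h using 2 with n
  · rfl
  rw [← Real.exp_nat_mul, ← Real.exp_add]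
  ring_nf

lemma key_integral :
    ∫ t in Ioi (0 : ℝ), t ^ 3 / (Real.exp t - 1) = π ^ 4 / 15 := by
  -- complex Mellin setup
  set F : ℝ → ℂ := fun t => ((1 / (Real.exp t - 1) : ℝ) : ℂ) with hF_def
  have hp : ∀ i : ℕ, (1 : ℂ) = 0 ∨ (0 : ℝ) < (i : ℝ) + 1 := fun i => Or.inr (by positivity)
  have hs : (0 : ℝ) < (4 : ℂ).re := by norm_num
  have hF : ∀ t ∈ Ioi (0 : ℝ),
      HasSum (fun i : ℕ => (1 : ℂ) * Real.exp (-((i : ℝ) + 1) * t)) (F t) := by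
    intro t ht
    simpa [F, Complex.ofReal_exp] using ((geom_aux ht).mapL Complex.ofRealCLM)
  have h_sum : Summable fun i : ℕ => ‖(1 : ℂ)‖ / ((i : ℝ) + 1) ^ (4 : ℂ).re := by
    simp only [norm_one]
    have : ∀ i : ℕ, (1 : ℝ) / ((i : ℝ) + 1) ^ (4 : ℂ).re = 1 / ((i + 1 : ℕ) : ℝ) ^ (4 : ℕ) := by
      intro i
      rw [show ((4 : ℂ).re) = ((4 : ℕ) : ℝ) by norm_num, Real.rpow_natCast]
      push_cast; ring_nf
    rw [funext this]
    exact (Real.summable_one_div_nat_pow.mpr (by norm_num)).comp_injective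
      (fun a b => by omega)
  have hmellin := hasSum_mellin (F := F) (a := fun _ : ℕ => (1 : ℂ))
    (p := fun i : ℕ => (i : ℝ) + 1) hp hs hF h_sum
  -- the sum equals Γ(4)·ζ(4) = 6·π⁴/90 = π⁴/15
  have hzeta : HasSum (fun n : ℕ => 1 / ((n : ℝ) + 1) ^ 4) (π ^ 4 / 90) := by
    have h : HasSum (fun n : ℕ => 1 / ((n + 1 : ℕ) : ℝ) ^ 4) (π ^ 4 / 90) :=
      (hasSum_nat_add_iff (f := fun m : ℕ => 1 / (m : ℝ) ^ 4) 1).mpr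
        (by simpa using hasSum_zeta_four)
    simpa using h
  have hGamma4 : Complex.Gamma 4 = 6 := by
    rw [show (4 : ℂ) = ((3 : ℕ) : ℂ) + 1 by norm_num, Complex.Gamma_nat_eq_factorial]
    norm_num [Nat.factorial]
  have hz : HasSum (fun i : ℕ => Complex.Gamma 4 * (1 : ℂ) / ((((i : ℝ) + 1) : ℝ) : ℂ) ^ (4 : ℂ))
      (((π ^ 4 / 15 : ℝ) : ℂ)) := by
    have h6 := ((hzeta.mapL Complex.ofRealCLM).mul_left (6 : ℂ))
    convert h6 using 2 with i
    · rfl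
    · rw [hGamma4, mul_one, show (4 : ℂ) = ((4 : ℕ) : ℂ) by norm_num,
        Complex.cpow_natCast]
      simp only [Complex.ofRealCLM_apply]
      push_cast
      ring
    · simp only [Complex.ofRealCLM_apply]
      push_cast
      ring_nf
  have hval : mellin F 4 = ((π ^ 4 / 15 : ℝ) : ℂ) := hmellin.unique hz
  have hreal : mellin F 4 = ((∫ t in Ioi (0 : ℝ), t ^ 3 / (Real.exp t - 1) : ℝ) : ℂ) := by
    rw [mellin]
    have hcong : ∀ t ∈ Ioi (0 : ℝ),
        (t : ℂ) ^ ((4 : ℂ) - 1) • F t = ((t ^ 3 / (Real.exp t - 1) : ℝ) : ℂ) := by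
      intro t ht
      have hpow : ((t : ℂ)) ^ ((4 : ℂ) - 1) = ((t ^ 3 : ℝ) : ℂ) := by
        rw [show (4 : ℂ) - 1 = ((3 : ℕ) : ℂ) by norm_num, Complex.cpow_natCast]
        push_cast; ring
      rw [smul_eq_mul, hpow]
      simp only [F]
      rw [← Complex.ofReal_mul, mul_one_div]
    rw [setIntegral_congr_fun measurableSet_Ioi hcong]
    exact integral_ofReal
  rw [hreal] at hval
  exact_mod_cast hval

lemma scaled_integral {b : ℝ} (hb : 0 < b) :
    ∫ ν in Ioi (0 : ℝ), ν ^ 3 / (Real.exp (b * ν) - 1) = π ^ 4 / (15 * b ^ 4) := by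
  have h1 := integral_comp_mul_left_Ioi (fun x : ℝ => x ^ 3 / (Real.exp x - 1)) 0 hb
  simp only [mul_zero, key_integral, smul_eq_mul] at h1
  have h2 : ∀ ν ∈ Ioi (0 : ℝ),
      ν ^ 3 / (Real.exp (b * ν) - 1)
        = b⁻¹ ^ 3 * ((b * ν) ^ 3 / (Real.exp (b * ν) - 1)) := by
    intro ν _
    rw [mul_div_assoc', mul_pow, ← mul_assoc, ← mul_pow, inv_mul_cancel₀ hb.ne',
      one_pow, one_mul]
  rw [setIntegral_congr_fun measurableSet_Ioi h2, integral_const_mul, h1]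
  field_simp

lemma planck_integral (h c k T : ℝ) (hh : 0 < h) (hc : 0 < c) (hk : 0 < k) (hT : 0 < T) :
    ∫ ν in Set.Ioi (0 : ℝ), planck h c k ν T
      = radConst h c k * c * T ^ 4 / (4 * π) := by
  set b : ℝ := h / (k * T) with hb_def
  have hb : 0 < b := by positivity
  have h2 : ∀ ν ∈ Ioi (0 : ℝ),
      planck h c k ν T = (2 * h / c ^ 2) * (ν ^ 3 / (Real.exp (b * ν) - 1)) := by
    intro ν _
    unfold planck
    rw [show h * ν / (k * T) = b * ν by rw [hb_def]; ring]
    ring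
  rw [setIntegral_congr_fun measurableSet_Ioi h2, integral_const_mul, scaled_integral hb,
    hb_def]
  unfold radConst
  have hπ : (0 : ℝ) < π := Real.pi_pos
  field_simp
  ring

lemma sphere_mass :
    ((volume : Measure (EuclideanSpace ℝ (Fin 3))).toSphere Set.univ)
      = ENNReal.ofReal (4 * π) := by
  rw [Measure.toSphere_apply_univ, EuclideanSpace.volume_ball]
  have hdim : Module.finrank ℝ (EuclideanSpace ℝ (Fin 3)) = 3 := by
    simp [finrank_euclideanSpace]
  have hcard : Fintype.card (Fin 3) = 3 := by simp
  rw [hdim, hcard]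
  have hΓ : Real.Gamma ((3 : ℝ) / 2 + 1) = 3 / 4 * Real.sqrt π := by
    rw [Real.Gamma_add_one (by norm_num)]
    rw [show (3 : ℝ) / 2 = 1 / 2 + 1 by norm_num, Real.Gamma_add_one (by norm_num),
      Real.Gamma_one_half_eq]
    ring
  have hsq : Real.sqrt π ^ 3 = π * Real.sqrt π := by
    rw [pow_succ, sq, Real.mul_self_sqrt Real.pi_pos.le]
  have hs : (0 : ℝ) < Real.sqrt π := Real.sqrt_pos.mpr Real.pi_pos
  have hval : Real.sqrt π ^ 3 / Real.Gamma ((3 : ℝ) / 2 + 1) = 4 / 3 * π := by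
    rw [hΓ, hsq]
    field_simp
  rw [show ((3 : ℝ)) / 2 + 1 = (3 : ℝ) / 2 + 1 by ring] at hval
  push_cast [hval]
  rw [show (3 : ENNReal) = ENNReal.ofReal 3 by norm_num, ENNReal.ofReal_one, one_pow,
    one_mul, ← ENNReal.ofReal_mul (by norm_num)]
  congr 1
  ring

/-- For all positive h, c, k, T: ∫₀^∞ B(ν,T) dν = a c T⁴/(4π); equivalently,
    integrating B over all frequencies and over the unit sphere of directions
    (surface measure of total mass 4π) gives a c T⁴. -/
theorem stmt_0 (h c k T : ℝ) (hh : 0 < h) (hc : 0 < c) (hk : 0 < k) (hT : 0 < T) :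
    (∫ ν in Set.Ioi (0 : ℝ), planck h c k ν T
        = radConst h c k * c * T ^ 4 / (4 * Real.pi)) ∧
      (∫ ν in Set.Ioi (0 : ℝ),
          ∫ _Ω : sphere (0 : EuclideanSpace ℝ (Fin 3)) 1,
            planck h c k ν T ∂(volume.toSphere)
        = radConst h c k * c * T ^ 4) := by
  have h1 := planck_integral h c k T hh hc hk hT
  refine ⟨h1, ?_⟩
  have hinner : ∀ ν : ℝ,
      (∫ _Ω : sphere (0 : EuclideanSpace ℝ (Fin 3)) 1,
          planck h c k ν T ∂(volume.toSphere)) = 4 * π * planck h c k ν T := by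
    intro ν
    rw [integral_const, measureReal_def, sphere_mass, ENNReal.toReal_ofReal (by positivity), smul_eq_mul]
  simp only [hinner]
  rw [integral_const_mul, h1]
  have hπ : π ≠ 0 := Real.pi_ne_zero
  field_simp
end

section
/- ∫₀^∞ x³/(exp(x) − 1) dx = π⁴/15. -/
open Real MeasureTheory

open Set in
lemma aux_hasSum (x : ℝ) (hx : x ∈ Set.Ioi (0:ℝ)) :
    HasSum (fun n : ℕ => x ^ 3 * Real.exp (-((n:ℝ) + 1) * x))
      (x ^ 3 / (Real.exp x - 1)) := by
  have hx0 : (0:ℝ) < x := hx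
  have h1 : Real.exp (-x) < 1 := by
    rw [Real.exp_lt_one_iff]; linarith
  have h0 : 0 ≤ Real.exp (-x) := (Real.exp_pos _).le
  have hgeo := hasSum_geometric_of_lt_one h0 h1
  have h := hgeo.mul_left (x ^ 3 * Real.exp (-x))
  have hne : Real.exp x - 1 ≠ 0 := by
    have := Real.add_one_lt_exp (ne_of_gt hx0)
    intro hcon; linarith
  have hterm : ∀ n : ℕ, x ^ 3 * Real.exp (-((n:ℝ) + 1) * x)
      = x ^ 3 * Real.exp (-x) * Real.exp (-x) ^ n := by
    intro n
    have : Real.exp (-x) ^ (n + 1) = Real.exp (((n:ℕ) + 1 : ℕ) * (-x)) :=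
      (Real.exp_nat_mul (-x) (n + 1)).symm
    rw [pow_succ'] at this
    rw [mul_assoc, this]
    congr 1
    push_cast
    ring
  have hval : x ^ 3 * Real.exp (-x) * (1 - Real.exp (-x))⁻¹
      = x ^ 3 / (Real.exp x - 1) := by
    rw [Real.exp_neg]
    have hpos := Real.exp_pos x
    rw [eq_div_iff hne]
    field_simp
  rw [← hval]
  exact h.congr_fun hterm

open Set in
lemma aux_integrable (n : ℕ) :
    IntegrableOn (fun x : ℝ => x ^ 3 * Real.exp (-((n:ℝ) + 1) * x)) (Set.Ioi 0) := by
  have hb : (0:ℝ) < (n:ℝ) + 1 := by positivity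
  have := integrableOn_rpow_mul_exp_neg_mul_rpow (p := 1) (s := 3) (b := (n:ℝ) + 1)
    (by norm_num) one_pos hb
  refine this.congr_fun (fun x hx => ?_) measurableSet_Ioi
  have hx0 : (0:ℝ) < x := hx
  beta_reduce
  rw [Real.rpow_one, show (3:ℝ) = ((3:ℕ):ℝ) by norm_num, Real.rpow_natCast]

open Set in
lemma aux_value (n : ℕ) :
    ∫ x in Set.Ioi (0:ℝ), x ^ 3 * Real.exp (-((n:ℝ) + 1) * x) = 6 / ((n:ℝ) + 1) ^ 4 := by
  have hb : (0:ℝ) < (n:ℝ) + 1 := by positivity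
  have h := Real.integral_rpow_mul_exp_neg_mul_Ioi (a := 4) (r := (n:ℝ) + 1)
    (by norm_num) hb
  have hG : Real.Gamma 4 = 6 := by
    rw [show (4:ℝ) = ((3:ℕ):ℝ) + 1 by norm_num, Real.Gamma_nat_eq_factorial]
    norm_num [Nat.factorial]
  rw [hG] at h
  have heq : ∫ x in Set.Ioi (0:ℝ), x ^ 3 * Real.exp (-((n:ℝ) + 1) * x)
      = ∫ t in Set.Ioi (0:ℝ), t ^ ((4:ℝ) - 1) * Real.exp (-(((n:ℝ) + 1) * t)) := by
    refine setIntegral_congr_fun measurableSet_Ioi (fun t ht => ?_)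
    have ht0 : (0:ℝ) < t := ht
    rw [show (4:ℝ) - 1 = ((3:ℕ):ℝ) by norm_num, Real.rpow_natCast, neg_mul]
  rw [heq, h, show (4:ℝ) = ((4:ℕ):ℝ) by norm_num, Real.rpow_natCast]
  rw [div_pow, one_pow]
  ring

/-- ∫₀^∞ x³/(eˣ − 1) dx = π⁴/15. -/
theorem stmt_1 :
    ∫ x in Set.Ioi (0 : ℝ), x ^ 3 / (Real.exp x - 1) = Real.pi ^ 4 / 15 := by
  have hsum_val : HasSum (fun n : ℕ => 6 / ((n:ℝ) + 1) ^ 4) (Real.pi ^ 4 / 15) := by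
    have h6 := hasSum_zeta_four.mul_left 6
    have h7 := (hasSum_nat_add_iff' (f := fun n : ℕ => 6 * ((1:ℝ) / (n:ℝ) ^ 4)) 1).mpr h6
    simp only [Finset.sum_range_one, Nat.cast_zero, Nat.cast_add, Nat.cast_one] at h7
    have heq : (fun n : ℕ => 6 / ((n:ℝ) + 1) ^ 4)
        = (fun n : ℕ => 6 * ((1:ℝ) / ((n:ℝ) + 1) ^ 4)) := by
      funext n; rw [mul_one_div]
    rw [heq]
    convert h7 using 1
    · rfl
    ring_nf
  have hint := MeasureTheory.hasSum_integral_of_summable_integral_norm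
    (F := fun (n : ℕ) (x : ℝ) => x ^ 3 * Real.exp (-((n:ℝ) + 1) * x))
    (μ := volume.restrict (Set.Ioi 0)) (fun n => aux_integrable n) ?_
  · have heq : ∫ x in Set.Ioi (0:ℝ), (∑' n : ℕ, x ^ 3 * Real.exp (-((n:ℝ) + 1) * x))
        = ∫ x in Set.Ioi (0:ℝ), x ^ 3 / (Real.exp x - 1) := by
      refine setIntegral_congr_fun measurableSet_Ioi (fun x hx => ?_)
      exact (aux_hasSum x hx).tsum_eq
    rw [heq] at hint
    simp only [aux_value] at hint
    exact (hsum_val.unique hint).symm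
  · refine Summable.congr (f := fun n : ℕ => 6 / ((n:ℝ) + 1) ^ 4) hsum_val.summable ?_
    intro n
    show (6:ℝ) / ((n:ℝ) + 1) ^ 4
        = ∫ a in Set.Ioi (0:ℝ), ‖a ^ 3 * Real.exp (-((n:ℝ) + 1) * a)‖
    rw [← aux_value n]
    refine (setIntegral_congr_fun measurableSet_Ioi (fun x hx => ?_)).symm
    have hx0 : (0:ℝ) < x := hx
    rw [Real.norm_eq_abs, abs_of_nonneg (by positivity)]
end

section
/- ∫₀^∞ x⁴ eˣ/(exp(x) − 1)² dx = 4π⁴/15. -/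
open Real MeasureTheory

noncomputable def f (n : ℕ) (x : ℝ) : ℝ := x ^ 4 * ((n : ℝ) * Real.exp (-(n * x)))

lemma f_integrableOn (n : ℕ) : IntegrableOn (f n) (Set.Ioi 0) := by
  rcases Nat.eq_zero_or_pos n with rfl | hn
  · have h0 : f 0 = fun _ : ℝ => (0:ℝ) := by funext x; simp [f]
    rw [h0]
    exact integrableOn_zero
  · have hb : (0:ℝ) < n := by exact_mod_cast hn
    have h1 := integrableOn_rpow_mul_exp_neg_mul_rpow (p := 1) (s := 4) (b := n)
      (by norm_num) zero_lt_one hb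
    have h2 : IntegrableOn (fun x : ℝ => (n:ℝ) * (x ^ (4:ℝ) * Real.exp (-(n:ℝ) * x ^ (1:ℝ))))
        (Set.Ioi 0) := h1.const_mul _
    refine h2.congr_fun (fun x hx => ?_) measurableSet_Ioi
    have h4 : x ^ (4:ℝ) = x ^ (4:ℕ) := by
      rw [show (4:ℝ) = ((4:ℕ):ℝ) by norm_num, Real.rpow_natCast]
    simp only [f, Real.rpow_one, h4, neg_mul]
    ring

lemma f_integral (n : ℕ) : ∫ x in Set.Ioi (0:ℝ), f n x = 24 / (n : ℝ) ^ 4 := by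
  rcases Nat.eq_zero_or_pos n with rfl | hn
  · simp [f]
  · have hb : (0:ℝ) < n := by exact_mod_cast hn
    have key := Real.integral_rpow_mul_exp_neg_mul_Ioi (a := 5) (r := n) (by norm_num) hb
    have h24 : Real.Gamma 5 = 24 := by
      rw [show (5:ℝ) = (4:ℕ) + 1 by norm_num, Real.Gamma_nat_eq_factorial]
      norm_num [Nat.factorial]
    rw [h24] at key
    calc ∫ x in Set.Ioi (0:ℝ), f n x
        = ∫ x in Set.Ioi (0:ℝ), (n : ℝ) * (x ^ ((5:ℝ) - 1) * Real.exp (-(n * x))) := by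
          refine setIntegral_congr_fun measurableSet_Ioi (fun x hx => ?_)
          have : x ^ ((5:ℝ) - 1) = x ^ (4:ℕ) := by
            rw [show (5:ℝ) - 1 = (4:ℕ) by norm_num, Real.rpow_natCast]
          rw [this]; simp only [f]; ring
      _ = (n : ℝ) * ((1 / n) ^ (5:ℝ) * 24) := by rw [integral_const_mul, key]
      _ = 24 / (n : ℝ) ^ 4 := by
          rw [show (5:ℝ) = (5:ℕ) by norm_num, Real.rpow_natCast]
          field_simp

lemma f_hasSum {x : ℝ} (hx : 0 < x) :
    HasSum (fun n => f n x) (x ^ 4 * Real.exp x / (Real.exp x - 1) ^ 2) := by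
  have hr : ‖Real.exp (-x)‖ < 1 := by
    rw [Real.norm_eq_abs, abs_of_pos (Real.exp_pos _)]
    exact Real.exp_lt_one_iff.mpr (by linarith)
  have h := (hasSum_coe_mul_geometric_of_norm_lt_one hr).mul_left (x ^ 4)
  have heq : ∀ n : ℕ, x ^ 4 * ((n : ℝ) * Real.exp (-x) ^ n) = f n x := by
    intro n
    rw [← Real.exp_nat_mul]
    simp only [f]
    ring_nf
  rw [funext heq] at h
  convert h using 1
  case e'_3 => rfl
  have h1 : Real.exp x - 1 > 0 := by
    have := Real.exp_lt_exp.mpr hx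
    simp only [Real.exp_zero] at this
    linarith
  have hx0 : Real.exp x ≠ 0 := (Real.exp_pos x).ne'
  rw [Real.exp_neg]
  have h2 : (Real.exp x)⁻¹ < 1 := inv_lt_one_of_one_lt₀ (by linarith)
  have h3 : 1 - (Real.exp x)⁻¹ ≠ 0 := ne_of_gt (by linarith)
  field_simp

/-- ∫₀^∞ x⁴eˣ/(eˣ − 1)² dx = 4π⁴/15. -/
theorem stmt_2 :
    ∫ x in Set.Ioi (0 : ℝ), x ^ 4 * Real.exp x / (Real.exp x - 1) ^ 2
      = 4 * Real.pi ^ 4 / 15 := by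
  have hmeas : ∀ n : ℕ, AEStronglyMeasurable (f n) (volume.restrict (Set.Ioi (0:ℝ))) := by
    intro n
    exact (Continuous.mul (by continuity) (by continuity)).aestronglyMeasurable
  have hnn : ∀ n : ℕ, 0 ≤ᵐ[volume.restrict (Set.Ioi (0:ℝ))] f n := by
    intro n
    filter_upwards [self_mem_ae_restrict (measurableSet_Ioi : MeasurableSet (Set.Ioi (0:ℝ)))]
      with x hx
    have : (0:ℝ) < x := hx
    simp only [Pi.zero_apply, f]
    positivity
  have hlin : ∀ n : ℕ, ∫⁻ x in Set.Ioi (0:ℝ), ‖f n x‖₊ = ENNReal.ofReal (24 / (n:ℝ) ^ 4) := by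
    intro n
    rw [← f_integral n, ofReal_integral_eq_lintegral_ofReal (f_integrableOn n) (hnn n)]
    refine lintegral_congr_ae ?_
    filter_upwards [hnn n] with x hx
    exact Real.enorm_eq_ofReal hx
  have hsum : Summable (fun n : ℕ => 24 / (n:ℝ) ^ 4) := by
    have := (hasSum_zeta_four.mul_left 24).summable
    simpa [mul_one_div, div_eq_mul_inv] using this
  have hfin : ∑' n : ℕ, ∫⁻ x in Set.Ioi (0:ℝ), ‖f n x‖₊ ≠ ⊤ := by
    simp_rw [hlin]
    rw [← ENNReal.ofReal_tsum_of_nonneg (fun n => by positivity) hsum]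
    exact ENNReal.ofReal_ne_top
  have key := integral_tsum hmeas hfin
  have hcong : ∫ x in Set.Ioi (0:ℝ), x ^ 4 * Real.exp x / (Real.exp x - 1) ^ 2
      = ∫ x in Set.Ioi (0:ℝ), ∑' n : ℕ, f n x := by
    refine setIntegral_congr_fun measurableSet_Ioi (fun x hx => ?_)
    exact ((f_hasSum hx).tsum_eq).symm
  rw [hcong, key]
  simp_rw [f_integral]
  have := (hasSum_zeta_four.mul_left 24).tsum_eq
  simp only [mul_one_div] at this
  rw [this]
  ring
end

section
/- For all positive reals h, c, k and T, the normalized Planck distribution integrates to one: ∫₀^∞ b(ν,T) dν = 1, where b(ν,T) = 4πB(ν,T)/(acT⁴). -/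
open Real MeasureTheory
open Set in

lemma planck_key (β : ℝ) (hβ : 0 < β) :
    ∫ x in Ioi (0:ℝ), x ^ 3 * (1 / (Real.exp (β * x) - 1)) = π ^ 4 / (15 * β ^ 4) := by
  set F : ℕ → ℝ → ℝ := fun n x ↦ x ^ 3 * Real.exp (-(((n : ℝ) + 1) * β) * x) with hF
  have hb : ∀ n : ℕ, 0 < ((n : ℝ) + 1) * β := fun n ↦ by positivity
  have hint : ∀ n, IntegrableOn (F n) (Ioi (0:ℝ)) := by
    intro n
    have h := integrableOn_rpow_mul_exp_neg_mul_rpow (s := 3) (p := 1)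
      (by norm_num) zero_lt_one (hb n)
    refine h.congr_fun (fun x hx ↦ ?_) measurableSet_Ioi
    have hx0 : (0:ℝ) < x := hx
    rw [hF]
    simp only [Real.rpow_one]
    rw [show (3:ℝ) = ((3:ℕ):ℝ) by norm_num, Real.rpow_natCast]
  have hval : ∀ n, ∫ x in Ioi (0:ℝ), F n x = (1 / (((n : ℝ) + 1) * β)) ^ 4 * 6 := by
    intro n
    have h := integral_rpow_mul_exp_neg_mul_Ioi (a := 4) (r := ((n : ℝ) + 1) * β)
      (by norm_num) (hb n)
    have hG : Real.Gamma 4 = 6 := by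
      rw [show (4:ℝ) = (3:ℕ) + 1 by norm_num, Real.Gamma_nat_eq_factorial]
      norm_num [Nat.factorial]
    rw [show ∫ x in Ioi (0:ℝ), F n x
        = ∫ t in Ioi (0:ℝ), t ^ ((4:ℝ) - 1) * Real.exp (-(((n : ℝ) + 1) * β * t)) from
      setIntegral_congr_fun measurableSet_Ioi fun x hx ↦ by
        rw [hF]
        simp only [neg_mul]
        rw [show (4:ℝ) - 1 = ((3:ℕ):ℝ) by norm_num, Real.rpow_natCast], h, hG]
    rw [show (1 / (((n : ℝ) + 1) * β)) ^ (4:ℝ) = (1 / (((n : ℝ) + 1) * β)) ^ (4:ℕ) by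
      rw [show (4:ℝ) = ((4:ℕ):ℝ) by norm_num, Real.rpow_natCast]]
  have hsum : ∀ x ∈ Ioi (0:ℝ), HasSum (fun n ↦ F n x)
      (x ^ 3 * (1 / (Real.exp (β * x) - 1))) := by
    intro x hx
    have hx0 : (0:ℝ) < x := hx
    set r := Real.exp (-(β * x)) with hr
    have hr0 : 0 ≤ r := (Real.exp_pos _).le
    have hr1 : r < 1 := by
      rw [hr, Real.exp_lt_one_iff]
      nlinarith
    have hg := (hasSum_geometric_of_lt_one hr0 hr1).mul_left (x ^ 3 * r)
    have he1 : 1 < Real.exp (β * x) := by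
      rw [← Real.exp_zero]
      exact Real.exp_lt_exp.mpr (by positivity)
    have key : x ^ 3 * r * (1 - r)⁻¹ = x ^ 3 * (1 / (Real.exp (β * x) - 1)) := by
      rw [hr, Real.exp_neg]
      have h1 : Real.exp (β * x) - 1 ≠ 0 := by linarith
      have h2 : Real.exp (β * x) ≠ 0 := (Real.exp_pos _).ne'
      field_simp
    rw [← key]
    refine hg.congr_fun fun n ↦ ?_
    rw [hF]
    simp only [mul_assoc]
    congr 1
    rw [← pow_succ', ← Real.exp_nat_mul]
    congr 1
    push_cast
    ring
  have hnorm : ∀ n, ∫ x in Ioi (0:ℝ), ‖F n x‖ = ∫ x in Ioi (0:ℝ), F n x := by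
    intro n
    refine setIntegral_congr_fun measurableSet_Ioi fun x hx ↦ ?_
    have hx0 : (0:ℝ) < x := hx
    exact Real.norm_of_nonneg (mul_nonneg (by positivity) (Real.exp_nonneg _))
  have hshift : HasSum (fun n : ℕ ↦ 1 / ((n : ℝ) + 1) ^ 4) (π ^ 4 / 90) := by
    have h := (hasSum_nat_add_iff' (f := fun n : ℕ ↦ 1 / (n : ℝ) ^ 4) 1).mpr hasSum_zeta_four
    simpa using h
  have hG : HasSum (fun n : ℕ ↦ (1 / (((n : ℝ) + 1) * β)) ^ 4 * 6) (π ^ 4 / (15 * β ^ 4)) := by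
    have h := hshift.mul_left (6 / β ^ 4)
    have he : 6 / β ^ 4 * (π ^ 4 / 90) = π ^ 4 / (15 * β ^ 4) := by
      field_simp; ring
    rw [he] at h
    refine h.congr_fun fun n ↦ ?_
    have hn : ((n : ℝ) + 1) ≠ 0 := by positivity
    field_simp
  have hS : Summable fun n ↦ ∫ x in Ioi (0:ℝ), ‖F n x‖ := by
    refine Summable.congr hG.summable fun n ↦ ?_
    rw [hnorm, hval]
  have H := hasSum_integral_of_summable_integral_norm (μ := volume.restrict (Ioi 0)) hint hS
  have heq : ∫ x in Ioi (0:ℝ), (∑' n, F n x) = ∫ x in Ioi (0:ℝ), x ^ 3 * (1 / (Real.exp (β * x) - 1)) :=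
    setIntegral_congr_fun measurableSet_Ioi fun x hx ↦ (hsum x hx).tsum_eq
  rw [heq] at H
  have H' : HasSum (fun n : ℕ ↦ (1 / (((n : ℝ) + 1) * β)) ^ 4 * 6)
      (∫ x in Ioi (0:ℝ), x ^ 3 * (1 / (Real.exp (β * x) - 1))) := by
    refine H.congr_fun fun n ↦ (hval n).symm
  exact (H'.unique hG)


/-- The normalized Planck distribution b(ν,T) = 4πB(ν,T)/(acT⁴). -/
noncomputable def normPlanck (h c k ν T : ℝ) : ℝ :=
  4 * Real.pi * planck h c k ν T / (radConst h c k * c * T ^ 4)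

/-- For all positive h, c, k, T, the normalized Planck distribution integrates to one. -/
theorem stmt_3 (h c k T : ℝ) (hh : 0 < h) (hc : 0 < c) (hk : 0 < k) (hT : 0 < T) :
    ∫ ν in Set.Ioi (0 : ℝ), normPlanck h c k ν T = 1 := by
  set β := h / (k * T) with hβdef
  have hβ : 0 < β := by positivity
  have hC : ∀ ν : ℝ, normPlanck h c k ν T
      = (15 * h ^ 4 / (Real.pi ^ 4 * k ^ 4 * T ^ 4)) *
        (ν ^ 3 * (1 / (Real.exp (β * ν) - 1))) := by
    intro ν
    have hb : β * ν = h * ν / (k * T) := by rw [hβdef]; ring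
    simp only [normPlanck, planck, radConst, hb]
    generalize (1 / (Real.exp (h * ν / (k * T)) - 1)) = D
    have hπ : Real.pi ≠ 0 := Real.pi_ne_zero
    field_simp
    ring
  calc ∫ ν in Set.Ioi (0:ℝ), normPlanck h c k ν T
      = ∫ ν in Set.Ioi (0:ℝ), (15 * h ^ 4 / (Real.pi ^ 4 * k ^ 4 * T ^ 4)) *
          (ν ^ 3 * (1 / (Real.exp (β * ν) - 1))) := by
        exact setIntegral_congr_fun measurableSet_Ioi fun ν _ ↦ hC ν
    _ = (15 * h ^ 4 / (Real.pi ^ 4 * k ^ 4 * T ^ 4)) *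
          ∫ ν in Set.Ioi (0:ℝ), ν ^ 3 * (1 / (Real.exp (β * ν) - 1)) := by
        rw [integral_const_mul]
    _ = (15 * h ^ 4 / (Real.pi ^ 4 * k ^ 4 * T ^ 4)) * (π ^ 4 / (15 * β ^ 4)) := by
        rw [planck_key β hβ]
    _ = 1 := by
        rw [hβdef]
        have hπ : Real.pi ≠ 0 := Real.pi_ne_zero
        field_simp
end

section
/- Let h, c, k, T be positive reals and let σ : (0,∞) → (0,∞) be a measurable frequency-dependent opacity such that ν ↦ ∂_T B(ν,T)/σ(ν) is integrable and has positive integral. Then ∫₀^∞ σ(ν)⁻¹·(b(ν,T) + (T/4)·∂_T b(ν,T)) dν = 1/σ_R, where σ_R = (∫₀^∞ ∂_T B(ν,T) dν)/(∫₀^∞ σ(ν)⁻¹ ∂_T B(ν,T) dν) is the Rosseland mean cross-section. -/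
open Real MeasureTheory

open Set

lemma integral_pow4_exp (r : ℝ) (hr : 0 < r) :
    ∫ x in Ioi (0:ℝ), x ^ 4 * Real.exp (-(r * x)) = 24 / r ^ 5 := by
  have h := integral_rpow_mul_exp_neg_mul_Ioi (a := 5) (r := r) (by norm_num) hr
  rw [show (5:ℝ) - 1 = 4 by norm_num] at h
  rw [setIntegral_congr_fun measurableSet_Ioi (fun x hx => ?_), h]
  · have : Real.Gamma 5 = 24 := by
      rw [show (5:ℝ) = (4:ℕ) + 1 by norm_num, Real.Gamma_nat_eq_factorial]
      norm_num [Nat.factorial]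
    rw [this, show ((1/r):ℝ) ^ (5:ℝ) = ((1/r):ℝ) ^ (5:ℕ) from by
      rw [← Real.rpow_natCast (1/r) 5]; norm_num, div_pow, one_pow]
    ring
  · show x ^ (4:ℕ) * Real.exp (-(r * x)) = x ^ (4:ℝ) * Real.exp (-(r * x))
    rw [← Real.rpow_natCast x 4]
    norm_num

lemma intOn_pow4 (r : ℝ) (hr : 0 < r) :
    IntegrableOn (fun x : ℝ => x ^ 4 * Real.exp (-(r * x))) (Ioi 0) := by
  have h1 : IntegrableOn (fun x : ℝ => Real.exp (-x) * x ^ (5 - 1 : ℝ)) (Ioi 0) :=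
    Real.GammaIntegral_convergent (s := 5) (by norm_num)
  have h2 : IntegrableOn (fun x : ℝ => x ^ 4 * Real.exp (-x)) (Ioi 0) := by
    apply h1.congr_fun (fun x hx => ?_) measurableSet_Ioi
    rw [show (5:ℝ) - 1 = 4 by norm_num, show x ^ (4:ℝ) = x ^ (4:ℕ) from by
      rw [← Real.rpow_natCast x 4]; norm_num]
    ring
  have := (integrableOn_Ioi_comp_mul_left_iff (fun x : ℝ => x ^ 4 * Real.exp (-x)) 0 hr).mpr
    (by simpa using h2)
  beta_reduce at this
  have h3 : IntegrableOn (fun x : ℝ => (r ^ 4)⁻¹ * ((r * x) ^ 4 * Real.exp (-(r * x)))) (Ioi 0) :=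
    this.const_mul (r ^ 4)⁻¹
  apply h3.congr_fun (fun x hx => ?_) measurableSet_Ioi
  field_simp

lemma hasSum_planck_series {x : ℝ} (hx : 0 < x) :
    HasSum (fun n : ℕ => x ^ 4 * (((n:ℝ)+1) * Real.exp (-(((n:ℝ)+1) * x))))
      (x ^ 4 * (Real.exp x / (Real.exp x - 1) ^ 2)) := by
  have hr : ‖Real.exp (-x)‖ < 1 := by
    rw [Real.norm_eq_abs, abs_of_pos (Real.exp_pos _)]
    exact Real.exp_lt_one_iff.mpr (by linarith)
  have h := hasSum_coe_mul_geometric_of_norm_lt_one (r := Real.exp (-x)) hr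
  have h2 : HasSum (fun n : ℕ => ((n+1:ℕ):ℝ) * Real.exp (-x) ^ (n+1))
      (Real.exp (-x) / (1 - Real.exp (-x)) ^ 2 - ∑ i ∈ Finset.range 1, (i:ℝ) * Real.exp (-x) ^ i) :=
    (hasSum_nat_add_iff' (f := fun n : ℕ => (n:ℝ) * Real.exp (-x) ^ n) 1).mpr (by simpa using h)
  simp only [Finset.range_one, Finset.sum_singleton, Nat.cast_zero, zero_mul, sub_zero] at h2
  · have h3 : HasSum (fun n : ℕ => x ^ 4 * (((n+1:ℕ):ℝ) * Real.exp (-x) ^ (n+1)))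
        (x ^ 4 * (Real.exp (-x) / (1 - Real.exp (-x)) ^ 2)) := h2.mul_left (x ^ 4)
    have he : Real.exp x - 1 ≠ 0 := by
      have := Real.exp_lt_exp.mpr (show (0:ℝ) < x from hx)
      simp only [Real.exp_zero] at this; linarith
    convert h3 using 2 with n
    · push_cast
      rw [← Real.exp_nat_mul]
      push_cast
      ring_nf
    · rw [Real.exp_neg]
      have hepos := Real.exp_pos x
      field_simp

lemma summable_24 : Summable (fun n : ℕ => 24 / ((n:ℝ)+1) ^ 4) := by
  have := hasSum_zeta_four.summable
  have h2 := ((summable_nat_add_iff (f := fun n : ℕ => (1:ℝ) / (n:ℝ) ^ 4) 1).mpr this).mul_left 24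
  apply h2.congr
  intro n
  push_cast
  ring

lemma integral_pow4_exp' (n : ℕ) :
    ∫ x in Ioi (0:ℝ), x ^ 4 * (((n:ℝ)+1) * Real.exp (-(((n:ℝ)+1) * x)))
      = 24 / ((n:ℝ)+1) ^ 4 := by
  have hn : (0:ℝ) < (n:ℝ)+1 := by positivity
  rw [show (fun x : ℝ => x ^ 4 * (((n:ℝ)+1) * Real.exp (-(((n:ℝ)+1) * x))))
      = (fun x : ℝ => ((n:ℝ)+1) * (x ^ 4 * Real.exp (-(((n:ℝ)+1) * x)))) from by
    funext x; ring]
  rw [integral_const_mul, integral_pow4_exp _ hn]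
  field_simp

lemma intOn_pow4' (n : ℕ) :
    IntegrableOn (fun x : ℝ => x ^ 4 * (((n:ℝ)+1) * Real.exp (-(((n:ℝ)+1) * x)))) (Ioi 0) := by
  have hn : (0:ℝ) < (n:ℝ)+1 := by positivity
  have h2 : IntegrableOn (fun x : ℝ => ((n:ℝ)+1) * (x ^ 4 * Real.exp (-(((n:ℝ)+1) * x))))
      (Ioi 0) := (intOn_pow4 _ hn).const_mul ((n:ℝ)+1)
  exact h2.congr_fun (fun x hx => by ring) measurableSet_Ioi

lemma integral_J : ∫ x in Ioi (0:ℝ), x ^ 4 * (Real.exp x / (Real.exp x - 1) ^ 2)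
    = 4 * π ^ 4 / 15 := by
  have key : ∫ x in Ioi (0:ℝ), ∑' n : ℕ, x ^ 4 * (((n:ℝ)+1) * Real.exp (-(((n:ℝ)+1) * x)))
      = ∑' n : ℕ, ∫ x in Ioi (0:ℝ), x ^ 4 * (((n:ℝ)+1) * Real.exp (-(((n:ℝ)+1) * x))) := by
    apply integral_tsum
    · intro i
      exact ((intOn_pow4' i).1)
    · have heq : ∀ i : ℕ, (∫⁻ a in Ioi (0:ℝ),
          ‖a ^ 4 * (((i:ℝ)+1) * Real.exp (-(((i:ℝ)+1) * a)))‖ₑ)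
          = ENNReal.ofReal (24 / ((i:ℝ)+1) ^ 4) := by
        intro i
        rw [← ofReal_integral_norm_eq_lintegral_enorm (intOn_pow4' i), ← integral_pow4_exp' i]
        congr 1
        refine setIntegral_congr_fun measurableSet_Ioi (fun x hx => ?_)
        rw [Real.norm_eq_abs, abs_of_nonneg]
        have : (0:ℝ) < x := hx
        positivity
      simp_rw [heq]
      rw [← ENNReal.ofReal_tsum_of_nonneg (fun n => by positivity) summable_24]
      exact ENNReal.ofReal_ne_top
  rw [setIntegral_congr_fun measurableSet_Ioi
    (fun x hx => ((hasSum_planck_series hx).tsum_eq).symm), key]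
  simp_rw [integral_pow4_exp']
  have h2 : HasSum (fun n : ℕ => 24 / ((n:ℝ)+1) ^ 4) (4 * π ^ 4 / 15) := by
    have h3 := (hasSum_nat_add_iff' (f := fun n : ℕ => (1:ℝ) / (n:ℝ) ^ 4) 1).mpr hasSum_zeta_four
    simp only [Finset.range_one, Finset.sum_singleton, Nat.cast_zero] at h3
    norm_num at h3
    have h4 := h3.mul_left 24
    have : (24:ℝ) * (π ^ 4 / 90) = 4 * π ^ 4 / 15 := by ring
    rw [this] at h4
    apply h4.congr_fun ?_
    intro n
    ring
  exact h2.tsum_eq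

noncomputable def dPlanck (h c k ν T : ℝ) : ℝ :=
  (2 * h ^ 2 * ν ^ 4 / (c ^ 2 * k * T ^ 2)) *
    (Real.exp (h * ν / (k * T)) / (Real.exp (h * ν / (k * T)) - 1) ^ 2)

lemma exp_sub_one_ne {y : ℝ} (hy : 0 < y) : Real.exp y - 1 ≠ 0 := by
  have : (1:ℝ) < Real.exp y := by
    rw [show (1:ℝ) = Real.exp 0 by simp]
    exact Real.exp_lt_exp.mpr hy
  linarith

lemma hasDerivAt_planck (h c k ν T : ℝ) (hh : 0 < h) (hc : 0 < c) (hk : 0 < k)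
    (hT : 0 < T) (hν : 0 < ν) :
    HasDerivAt (fun T' => planck h c k ν T') (dPlanck h c k ν T) T := by
  have hx : 0 < h * ν / (k * T) := by positivity
  have hne : Real.exp (h * ν / (k * T)) - 1 ≠ 0 := exp_sub_one_ne hx
  have h1 : HasDerivAt (fun T' : ℝ => h * ν / (k * T'))
      ((0 * (k * T) - h * ν * (k * 1)) / (k * T) ^ 2) T :=
    (hasDerivAt_const T (h * ν)).div ((hasDerivAt_id T).const_mul k) (by positivity)
  have h2 := h1.exp
  have h3 := h2.sub_const 1
  have h4 := (hasDerivAt_const T (1:ℝ)).div h3 hne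
  have h5 := h4.const_mul (2 * h * ν ^ 3 / c ^ 2)
  refine h5.congr_deriv ?_
  unfold dPlanck
  field_simp
  ring

lemma hasDerivAt_normPlanck (h c k ν T : ℝ) (hh : 0 < h) (hc : 0 < c) (hk : 0 < k)
    (hT : 0 < T) (hν : 0 < ν) :
    HasDerivAt (fun T' => 4 * π * planck h c k ν T' / (radConst h c k * c * T' ^ 4))
      ((4 * π * dPlanck h c k ν T * (radConst h c k * c * T ^ 4)
        - 4 * π * planck h c k ν T * (radConst h c k * c * (4 * T ^ 3)))
        / (radConst h c k * c * T ^ 4) ^ 2) T := by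
  have ha : 0 < radConst h c k := by unfold radConst; positivity
  have h1 := (hasDerivAt_planck h c k ν T hh hc hk hT hν).const_mul (4 * π)
  have h2 : HasDerivAt (fun T' : ℝ => radConst h c k * c * T' ^ 4)
      (radConst h c k * c * (4 * T ^ 3)) T := by
    have := (hasDerivAt_pow 4 T).const_mul (radConst h c k * c)
    refine this.congr_deriv ?_
    norm_num
  exact h1.div h2 (by positivity)

/-- The Rosseland mean identity: for a measurable positive opacity σ(ν) with
    ν ↦ ∂_T B(ν,T)/σ(ν) integrable and of positive integral,
    ∫₀^∞ σ(ν)⁻¹·(b(ν,T) + (T/4)∂_T b(ν,T)) dν = 1/σ_R, where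
    σ_R = (∫₀^∞ ∂_T B(ν,T) dν)/(∫₀^∞ σ(ν)⁻¹ ∂_T B(ν,T) dν). -/
theorem stmt_6 (h c k T : ℝ) (hh : 0 < h) (hc : 0 < c) (hk : 0 < k) (hT : 0 < T)
    (σ : ℝ → ℝ) (hσmeas : Measurable σ) (hσpos : ∀ ν ∈ Set.Ioi (0 : ℝ), 0 < σ ν)
    (hint : IntegrableOn
      (fun ν => (σ ν)⁻¹ * deriv (fun T' => planck h c k ν T') T) (Set.Ioi 0))
    (hpos : 0 < ∫ ν in Set.Ioi (0 : ℝ),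
      (σ ν)⁻¹ * deriv (fun T' => planck h c k ν T') T) :
    ∫ ν in Set.Ioi (0 : ℝ),
        (σ ν)⁻¹ *
          (normPlanck h c k ν T + (T / 4) * deriv (fun T' => normPlanck h c k ν T') T)
      = 1 /
        ((∫ ν in Set.Ioi (0 : ℝ), deriv (fun T' => planck h c k ν T') T) /
          (∫ ν in Set.Ioi (0 : ℝ), (σ ν)⁻¹ * deriv (fun T' => planck h c k ν T') T)) := by
  have hπ := Real.pi_pos
  have ha : 0 < radConst h c k := by unfold radConst; positivity
  have hane : radConst h c k ≠ 0 := ne_of_gt ha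
  have hcne : c ≠ 0 := ne_of_gt hc
  have hTne : T ≠ 0 := ne_of_gt hT
  have hπne : π ≠ 0 := ne_of_gt hπ
  have hdB : ∀ ν ∈ Set.Ioi (0:ℝ),
      deriv (fun T' => planck h c k ν T') T = dPlanck h c k ν T := fun ν hν =>
    (hasDerivAt_planck h c k ν T hh hc hk hT hν).deriv
  have hpt : ∀ ν ∈ Set.Ioi (0:ℝ),
      (σ ν)⁻¹ * (normPlanck h c k ν T + (T / 4) * deriv (fun T' => normPlanck h c k ν T') T)
      = (π / (radConst h c k * c * T ^ 3)) *
        ((σ ν)⁻¹ * deriv (fun T' => planck h c k ν T') T) := by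
    intro ν hν
    have hν' : (0:ℝ) < ν := hν
    have hD := hasDerivAt_normPlanck h c k ν T hh hc hk hT hν'
    have hfun : (fun T' => normPlanck h c k ν T')
        = (fun T' => 4 * π * planck h c k ν T' / (radConst h c k * c * T' ^ 4)) := by
      funext T'; rfl
    have hD' : deriv (fun T' => normPlanck h c k ν T') T
        = (4 * π * dPlanck h c k ν T * (radConst h c k * c * T ^ 4)
          - 4 * π * planck h c k ν T * (radConst h c k * c * (4 * T ^ 3)))
          / (radConst h c k * c * T ^ 4) ^ 2 := by
      rw [hfun]; exact hD.deriv
    rw [hD', hdB ν hν]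
    unfold normPlanck
    set B := planck h c k ν T
    set dB := dPlanck h c k ν T
    have hkey : 4 * π * B / (radConst h c k * c * T ^ 4)
        + T / 4 * ((4 * π * dB * (radConst h c k * c * T ^ 4)
          - 4 * π * B * (radConst h c k * c * (4 * T ^ 3)))
          / (radConst h c k * c * T ^ 4) ^ 2)
        = π / (radConst h c k * c * T ^ 3) * dB := by
      field_simp
      ring
    rw [hkey]
    ring
  rw [setIntegral_congr_fun measurableSet_Ioi hpt, integral_const_mul]
  have hIB : (∫ ν in Set.Ioi (0:ℝ), deriv (fun T' => planck h c k ν T') T)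
      = radConst h c k * c * T ^ 3 / π := by
    rw [setIntegral_congr_fun measurableSet_Ioi hdB]
    have hb : (0:ℝ) < k * T / h := by positivity
    have hsub := integral_comp_mul_left_Ioi (fun ν => dPlanck h c k ν T) 0 hb
    simp only [mul_zero] at hsub
    have hptg : ∀ x ∈ Set.Ioi (0:ℝ), dPlanck h c k ((k * T / h) * x) T
        = (2 * k ^ 3 * T ^ 2 / (c ^ 2 * h ^ 2))
          * (x ^ 4 * (Real.exp x / (Real.exp x - 1) ^ 2)) := by
      intro x hx
      have hx' : (0:ℝ) < x := hx
      unfold dPlanck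
      have harg : h * (k * T / h * x) / (k * T) = x := by field_simp
      rw [harg]
      have hne : Real.exp x - 1 ≠ 0 := exp_sub_one_ne hx'
      field_simp
    rw [setIntegral_congr_fun measurableSet_Ioi hptg, integral_const_mul, integral_J] at hsub
    rw [smul_eq_mul] at hsub
    have hI : (∫ ν in Set.Ioi (0:ℝ), dPlanck h c k ν T)
        = (k * T / h) * (2 * k ^ 3 * T ^ 2 / (c ^ 2 * h ^ 2) * (4 * π ^ 4 / 15)) := by
      rw [hsub, ← mul_assoc, mul_inv_cancel₀ (ne_of_gt hb), one_mul]
    rw [hI]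
    unfold radConst
    field_simp
    ring
  rw [hIB, one_div_div, div_div_eq_mul_div]
  ring
end
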